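/- Let k be a finite field and K^perf a perfect field extension of k that is not algebraic over k (e.g. the perfection of a local field with residue field k). Let f̄ ∈ k((τ⁻¹)) be a twisted Laurent series not lying in k[[τ⁻¹]] (i.e. having some nonzero coefficient in positive degree). Then any element h ∈ K^perf((τ⁻¹)) commuting with f̄ lies in k((τ⁻¹)). -/

import Mathlib

/-!
Descending induction on the index `j`, starting from `h j = 0` for `j > e`. Let `D > 0` be the
top degree of `f̄`. In the coefficient of `τ ^ (D + j)` of `f̄ h - h f̄`, the terms coming from
`f̄_i τ ^ i` with `i < D` only involve `h (D + j - i)` with `D + j - i > j`, so they lie in `k`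
by induction, Frobenius preserving `k` because `k` is perfect. The remaining term is
`f̄_D h_j ^ (p ^ D) - h_j f̄_D ^ (p ^ j)`, so `h_j` is a root of a nonzero polynomial over `k` of
degree `p ^ D ≥ 2`: it is algebraic over `k`, hence lies in `k`.
-/

open Function Polynomial

theorem mem_of_finsum_eq_zero_of_forall_ne {ι M S : Type*} [AddCommGroup M] [SetLike S M]
    [AddSubgroupClass S M] {s : S} {g : ι → M} (hg : HasFiniteSupport g)
    (hsum : ∑ᶠ i, g i = 0) {a : ι} (hmem : ∀ i ≠ a, g i ∈ s) : g a ∈ s := by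
  have hsplit := add_finsum_cond_ne a hg
  rw [hsum, add_eq_zero_iff_eq_neg] at hsplit
  rw [hsplit]
  refine neg_mem (finsum_induction _ (zero_mem s) (fun _ _ => add_mem) fun i => ?_)
  exact finsum_induction _ (zero_mem s) (fun _ _ => add_mem) (hmem i)

theorem frobeniusEquiv_pow_apply (R : Type*) [CommSemiring R] (p : ℕ) [ExpChar R p]
    [PerfectRing R p] (n : ℕ) (x : R) : (frobeniusEquiv R p ^ n) x = x ^ p ^ n := by
  rw [← iterateFrobeniusEquiv_eq_pow, iterateFrobeniusEquiv_def]

theorem RingHom.map_zpow_frobeniusEquiv {R S : Type*} [CommSemiring R] [CommSemiring S] (p : ℕ)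
    [ExpChar R p] [PerfectRing R p] [ExpChar S p] [PerfectRing S p] (f : R →+* S) (m : ℤ)
    (x : R) : f ((frobeniusEquiv R p ^ m) x) = (frobeniusEquiv S p ^ m) (f x) := by
  induction m using Int.induction_on generalizing x with
  | zero => rfl
  | succ n ih =>
    simp only [zpow_add_one, RingAut.mul_apply, frobeniusEquiv_def, map_pow, ih]
  | pred n ih =>
    simp only [zpow_sub_one, RingAut.mul_apply, RingAut.inv_apply,
      RingHom.map_frobeniusEquiv_symm, ih]

theorem isAlgebraic_of_mul_pow_sub_mul_mem_range {k K : Type*} [CommRing k] [CommRing K]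
    [Algebra k K] {a b : k} (ha : a ≠ 0) {n : ℕ} (hn : 1 < n) {x : K}
    (hx : algebraMap k K a * x ^ n - x * algebraMap k K b ∈ (algebraMap k K).range) :
    IsAlgebraic k x := by
  obtain ⟨c, hc⟩ := hx
  refine ⟨C a * X ^ n - X * C b - C c, fun h0 => ha ?_, ?_⟩
  · have := congrArg (coeff · n) h0
    simpa [coeff_X, coeff_C, hn.ne, (zero_lt_one.trans hn).ne'] using this
  · simp only [map_sub, map_mul, aeval_C, aeval_X, aeval_X_pow, hc]
    ring

theorem exists_greatest_ne_zero_of_pos {M : Type*} [Zero M] {f : ℤ → M} {d : ℤ}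
    (hf : ∀ i, d < i → f i = 0) (hpos : ∃ i, 0 < i ∧ f i ≠ 0) :
    ∃ D : ℕ, 0 < D ∧ f D ≠ 0 ∧ ∀ i, (D : ℤ) < i → f i = 0 := by
  obtain ⟨i₀, hi₀, hfi₀⟩ := hpos
  obtain ⟨D, hfD, hDmax⟩ := Int.exists_greatest_of_bdd (P := fun i => f i ≠ 0)
    ⟨d, fun i hi => not_lt.mp fun hdi => hi (hf i hdi)⟩ ⟨i₀, hfi₀⟩
  have hD : 0 < D := hi₀.trans_le (hDmax i₀ hfi₀)
  refine ⟨D.toNat, by omega, by rwa [Int.toNat_of_nonneg hD.le], fun i hi => ?_⟩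
  by_contra hfi
  have := hDmax i hfi
  omega

theorem Int.strong_decreasing_induction {P : ℤ → Prop} {e : ℤ} (hgt : ∀ j, e < j → P j)
    (hstep : ∀ j, (∀ j', j < j' → P j') → P j) (j : ℤ) : P j := by
  simpa using Int.strongRec (m := -e) (motive := fun n => P (-n)) (fun n hn => hgt _ (by omega))
    (fun n _ ih => hstep _ fun j' hj' => by simpa using ih (-j') (by omega)) (-j)

section TwistedCommutator

variable (p : ℕ) {k K : Type*} [CommRing k] [ExpChar k p] [PerfectRing k p] [CommRing K]
  [ExpChar K p] [PerfectRing K p] [Algebra k K]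

/-- `(f i τ ^ i) (h (t - i) τ ^ (t - i)) - (h (t - i) τ ^ (t - i)) (f i τ ^ i)`, read off at
`τ ^ t`, for coefficients `f` over `k` and `h` over `K`. -/
noncomputable def twistedCommutatorTerm (f : ℤ → k) (h : ℤ → K) (t i : ℤ) : K :=
  algebraMap k K (f i) * (frobeniusEquiv K p ^ i) (h (t - i)) -
    h (t - i) * algebraMap k K ((frobeniusEquiv k p ^ (t - i)) (f i))

variable {p} {f : ℤ → k} {h : ℤ → K}

theorem support_twistedCommutatorTerm_subset {d e : ℤ} (hf : ∀ i, d < i → f i = 0)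
    (hh : ∀ i, e < i → h i = 0) (t : ℤ) :
    support (twistedCommutatorTerm p f h t) ⊆ Set.Icc (t - e) d := by
  intro i hi
  rw [mem_support] at hi
  constructor
  · by_contra hlt
    exact hi (by simp [twistedCommutatorTerm, hh (t - i) (by omega)])
  · by_contra hlt
    exact hi (by simp [twistedCommutatorTerm, hf i (by omega)])

theorem twistedCommutatorTerm_eq_zero {t i : ℤ} (hfi : f i = 0) :
    twistedCommutatorTerm p f h t i = 0 := by
  simp [twistedCommutatorTerm, hfi]

theorem twistedCommutatorTerm_mem_range {t i : ℤ} (hh : h (t - i) ∈ (algebraMap k K).range) :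
    twistedCommutatorTerm p f h t i ∈ (algebraMap k K).range := by
  obtain ⟨c, hc⟩ := hh
  refine ⟨f i * (frobeniusEquiv k p ^ i) c - c * (frobeniusEquiv k p ^ (t - i)) (f i), ?_⟩
  simp only [twistedCommutatorTerm, map_sub, map_mul, RingHom.map_zpow_frobeniusEquiv, hc]

theorem twistedCommutatorTerm_add_self (D : ℕ) (j : ℤ) :
    twistedCommutatorTerm p f h (D + j) D =
      algebraMap k K (f D) * h j ^ p ^ D -
        h j * algebraMap k K ((frobeniusEquiv k p ^ j) (f D)) := by
  simp only [twistedCommutatorTerm, add_sub_cancel_left, zpow_natCast, frobeniusEquiv_pow_apply]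

theorem coeff_mem_range_of_forall_gt (hp : 1 < p)
    (halgclosed : ∀ ξ : K, IsAlgebraic k ξ → ξ ∈ (algebraMap k K).range) {d e : ℤ}
    (hf : ∀ i, d < i → f i = 0) (hh : ∀ i, e < i → h i = 0)
    (hcomm : ∀ t, ∑ᶠ i, twistedCommutatorTerm p f h t i = 0) {D : ℕ} (hD : 0 < D)
    (hfD : f D ≠ 0) (hDtop : ∀ i, (D : ℤ) < i → f i = 0) (j : ℤ)
    (habove : ∀ j', j < j' → h j' ∈ (algebraMap k K).range) : h j ∈ (algebraMap k K).range := by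
  have hfin : HasFiniteSupport (twistedCommutatorTerm p f h (D + j)) :=
    (Set.finite_Icc _ _).subset (support_twistedCommutatorTerm_subset hf hh _)
  have htop := mem_of_finsum_eq_zero_of_forall_ne (s := (algebraMap k K).range) hfin
    (hcomm _) (a := (D : ℤ)) fun i hi => by
      rcases hi.lt_or_gt with hlt | hgt
      · exact twistedCommutatorTerm_mem_range (habove _ (by omega))
      · rw [twistedCommutatorTerm_eq_zero (hDtop i hgt)]
        exact zero_mem _
  rw [twistedCommutatorTerm_add_self] at htop
  exact halgclosed _ (isAlgebraic_of_mul_pow_sub_mul_mem_range hfD (Nat.one_lt_pow hD.ne' hp) htop)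

end TwistedCommutator

theorem coeff_mem_of_commute_twisted
    (p : ℕ) [Fact p.Prime] (k : Type*) [Field k] [Fintype k] [CharP k p]
    (Kp : Type*) [Field Kp] [CharP Kp p] [PerfectRing Kp p] [Algebra k Kp]
    (halgclosed : ∀ ξ : Kp, IsAlgebraic k ξ → ∃ c : k, algebraMap k Kp c = ξ)
    (f : ℤ → k) (d : ℤ) (hfd : ∀ i, d < i → f i = 0)
    (hfpos : ∃ i : ℤ, 0 < i ∧ f i ≠ 0)
    (h : ℤ → Kp) (e : ℤ) (he : ∀ i, e < i → h i = 0)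
    (hcomm : ∀ t : ℤ,
      ∑ᶠ i : ℤ,
        (algebraMap k Kp (f i) * ((frobeniusEquiv Kp p ^ i) (h (t - i))) -
          h (t - i) * algebraMap k Kp ((frobeniusEquiv k p ^ (t - i)) (f i))) = 0) :
    ∀ j : ℤ, ∃ c : k, algebraMap k Kp c = h j := by
  obtain ⟨D, hD, hfD, hDtop⟩ := exists_greatest_ne_zero_of_pos hfd hfpos
  have step := coeff_mem_range_of_forall_gt (Fact.out : p.Prime).one_lt halgclosed hfd he hcomm
    hD hfD hDtop
  exact Int.strong_decreasing_induction (P := fun j => h j ∈ (algebraMap k Kp).range)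
    (fun j hj => by rw [he j hj]; exact zero_mem _) step
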